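/- arXiv:2512.03948 — 3 statements merged into one kernel-verified Lean document; each statement's English description precedes it below -/
import Mathlib

section
/- The infimum of the function x ↦ 2/τ₁(x) over x ∈ (0,1) equals (3 + √6)/3, where τ₁(x) = (3/2)(4 − x) − (√3/2)·√(32 − 8x + 3x²). -/
open Real

theorem stmt_2 :
    let τ₁ : ℝ → ℝ := fun x => (3/2) * (4 - x) - (Real.sqrt 3 / 2) * Real.sqrt (32 - 8*x + 3*x^2)
    sInf ((fun x => 2 / τ₁ x) '' Set.Ioo (0 : ℝ) 1) = (3 + Real.sqrt 6) / 3 := by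
  intro τ₁
  have hs6 : Real.sqrt 6 ^ 2 = 6 := Real.sq_sqrt (by norm_num)
  have hs6nn : (0:ℝ) ≤ Real.sqrt 6 := Real.sqrt_nonneg 6
  have hs6lt3 : Real.sqrt 6 < 3 := by nlinarith
  have hs6ge2 : (2:ℝ) ≤ Real.sqrt 6 := by nlinarith
  set c : ℝ := (3 + Real.sqrt 6) / 3 with hc
  have hsqrt3 : ∀ x : ℝ, Real.sqrt 3 * Real.sqrt (32 - 8*x + 3*x^2)
      = Real.sqrt (3 * (32 - 8*x + 3*x^2)) := fun x =>
    (Real.sqrt_mul (by norm_num) _).symm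
  have hτpos : ∀ x ∈ Set.Ioo (0:ℝ) 1, 0 < τ₁ x := by
    intro x hx
    obtain ⟨h0, h1⟩ := hx
    have h : Real.sqrt (3 * (32 - 8*x + 3*x^2)) < 3 * (4 - x) := by
      rw [show (3:ℝ) * (4 - x) = Real.sqrt ((3*(4-x))^2) from (Real.sqrt_sq (by nlinarith)).symm]
      apply Real.sqrt_lt_sqrt (by nlinarith [sq_nonneg (3*x - 4)])
      nlinarith
    simp only [τ₁]
    nlinarith [hsqrt3 x]
  have hτle : ∀ x ∈ Set.Ioo (0:ℝ) 1, τ₁ x ≤ 6 - 2 * Real.sqrt 6 := by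
    intro x hx
    obtain ⟨h0, h1⟩ := hx
    have h : 4 * Real.sqrt 6 - 3 * x ≤ Real.sqrt (3 * (32 - 8*x + 3*x^2)) := by
      rw [show 4 * Real.sqrt 6 - 3 * x
          = Real.sqrt ((4 * Real.sqrt 6 - 3 * x)^2) from (Real.sqrt_sq (by nlinarith)).symm]
      apply Real.sqrt_le_sqrt
      nlinarith
    simp only [τ₁]
    nlinarith [hsqrt3 x]
  have hlb : ∀ y ∈ (fun x => 2 / τ₁ x) '' Set.Ioo (0:ℝ) 1, c ≤ y := by
    rintro y ⟨x, hx, rfl⟩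
    have h1 := hτpos x hx
    have h2 := hτle x hx
    rw [hc, div_le_div_iff₀ (by norm_num) h1]
    nlinarith
  have hbdd : BddBelow ((fun x => 2 / τ₁ x) '' Set.Ioo (0:ℝ) 1) := ⟨c, hlb⟩
  have hne : ((fun x => 2 / τ₁ x) '' Set.Ioo (0:ℝ) 1).Nonempty :=
    ⟨_, ⟨(1:ℝ)/2, by norm_num, rfl⟩⟩
  have hτcont : Continuous τ₁ := by
    apply Continuous.sub
    · fun_prop
    · exact continuous_const.mul ((continuous_const.sub
        ((continuous_const.mul continuous_id))).add
        ((continuous_const.mul (continuous_pow 2)))).sqrt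
  have hτ0 : τ₁ 0 = 6 - 2 * Real.sqrt 6 := by
    have h96 : Real.sqrt 96 = 4 * Real.sqrt 6 := by
      rw [show (96:ℝ) = 4^2 * 6 by norm_num, Real.sqrt_mul (by positivity),
        Real.sqrt_sq (by norm_num)]
    have h := hsqrt3 0
    simp only [τ₁]
    norm_num at h ⊢
    linarith
  have hτ0ne : τ₁ 0 ≠ 0 := by rw [hτ0]; nlinarith
  have hval : 2 / τ₁ 0 = c := by
    rw [hτ0, hc, div_eq_div_iff (by nlinarith) (by norm_num)]
    nlinarith
  have hcont : ContinuousAt (fun x => 2 / τ₁ x) 0 :=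
    continuousAt_const.div hτcont.continuousAt hτ0ne
  have htend : Filter.Tendsto (fun x => 2 / τ₁ x) (nhdsWithin 0 (Set.Ioo (0:ℝ) 1)) (nhds c) := by
    rw [← hval]
    exact hcont.tendsto.mono_left nhdsWithin_le_nhds
  have hnb : (nhdsWithin (0:ℝ) (Set.Ioo (0:ℝ) 1)).NeBot := by
    rw [← mem_closure_iff_nhdsWithin_neBot, closure_Ioo (by norm_num : (0:ℝ) ≠ 1)]
    constructor <;> norm_num
  refine le_antisymm ?_ (le_csInf hne hlb)
  by_contra h
  push_neg at h
  have hev : ∀ᶠ x in nhdsWithin (0:ℝ) (Set.Ioo (0:ℝ) 1),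
      2 / τ₁ x < sInf ((fun x => 2 / τ₁ x) '' Set.Ioo (0:ℝ) 1) :=
    htend.eventually_lt_const h
  obtain ⟨x, hfx, hxmem⟩ := (hev.and self_mem_nhdsWithin).exists
  exact absurd (csInf_le hbdd ⟨x, hxmem, rfl⟩) (not_le.2 hfx)
end

section
/- For real x with 0 < x < 1 and a real constant c > (3 + √6)/3, the inequality 2/τ₁(x) < c holds if and only if x < 2(3c² − 6c + 1)/(3c(2c − 1)), where τ₁(x) = (3/2)(4 − x) − (√3/2)·√(32 − 8x + 3x²). -/
set_option maxHeartbeats 1000000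


open Real

theorem stmt_3 (x c : ℝ) (hx0 : 0 < x) (hx1 : x < 1) (hc : (3 + Real.sqrt 6) / 3 < c) :
    let τ₁ : ℝ → ℝ := fun x => (3/2) * (4 - x) - (Real.sqrt 3 / 2) * Real.sqrt (32 - 8*x + 3*x^2)
    2 / τ₁ x < c ↔ x < 2 * (3*c^2 - 6*c + 1) / (3*c*(2*c - 1)) := by
  intro τ₁
  simp only [τ₁]
  have hQ : (0:ℝ) ≤ 32 - 8*x + 3*x^2 := by nlinarith
  set s := Real.sqrt (32 - 8*x + 3*x^2) with hsdef
  have hs2 : s^2 = 32 - 8*x + 3*x^2 := Real.sq_sqrt hQ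
  have hsnn : 0 ≤ s := Real.sqrt_nonneg _
  set t := Real.sqrt 3 with htdef
  have ht2 : t^2 = 3 := Real.sq_sqrt (by norm_num)
  have htnn : 0 ≤ t := Real.sqrt_nonneg _
  have h6 : 0 ≤ Real.sqrt 6 := Real.sqrt_nonneg _
  have hc1 : 1 < c := by nlinarith
  have hc0 : 0 < c := by linarith
  have hQ2 : (t*s)^2 = 3*(32 - 8*x + 3*x^2) := by rw [mul_pow, ht2, hs2]
  have hts : t * s < 3 * (4 - x) := by
    nlinarith [mul_nonneg htnn hsnn, hQ2]
  have hτ : 0 < (3/2) * (4 - x) - t / 2 * s := by nlinarith [hts]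
  have hD : 0 < 3*c*(2*c - 1) := by nlinarith
  rw [div_lt_iff₀ hτ, lt_div_iff₀ hD]
  have h0 : 0 ≤ c*(t*s) := mul_nonneg hc0.le (mul_nonneg htnn hsnn)
  have hcts : (c*(t*s))^2 = 3*c^2*(32 - 8*x + 3*x^2) := by
    have h : (c*(t*s))^2 = c^2 * (t*s)^2 := by ring
    rw [h, hQ2]; ring
  constructor
  · intro h
    have key : c*(t*s) < 3*c*(4-x) - 4 := by nlinarith [h]
    have key2 : 3*c^2*(32 - 8*x + 3*x^2) < (3*c*(4-x) - 4)^2 := by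
      nlinarith [key, h0, hcts]
    nlinarith [key2]
  · intro h
    have hb : 0 < 3*c*(4-x) - 4 := by nlinarith
    have key2 : 3*c^2*(32 - 8*x + 3*x^2) < (3*c*(4-x) - 4)^2 := by nlinarith [h, sq_nonneg c, sq_nonneg (c*x)]
    have key : c*(t*s) < 3*c*(4-x) - 4 := by
      nlinarith [h0, hb, key2, hcts]
    nlinarith [key]
end

section
/- Let d₁ ≥ d₂ ≥ d₃ ≥ 2 be integers with d₁ ≥ 3, and set d = d₁ + d₂ + d₃. Then 9(d−1)² − 12(d₁d₂ + d₂d₃ + d₃d₁) ≥ 0 and δ₁ := 1/2 − √(9(d−1)² − 12(d₁d₂+d₂d₃+d₃d₁)) / (6(d−3)) is strictly positive. -/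
theorem stmt_6 (d₁ d₂ d₃ : ℤ) (h12 : d₂ ≤ d₁) (h23 : d₃ ≤ d₂) (h3 : 2 ≤ d₃) (h1 : 3 ≤ d₁) :
    let d : ℤ := d₁ + d₂ + d₃
    let δ₁ : ℝ := 1/2 - Real.sqrt ((9*(d-1)^2 - 12*(d₁*d₂ + d₂*d₃ + d₃*d₁) : ℤ)) / (6*((d : ℝ) - 3))
    (0 : ℤ) ≤ 9*(d-1)^2 - 12*(d₁*d₂ + d₂*d₃ + d₃*d₁) ∧ 0 < δ₁ := by
  intro d δ₁
  have h2 : 2 ≤ d₂ := le_trans h3 h23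
  have hA : (0 : ℤ) ≤ 9*(d-1)^2 - 12*(d₁*d₂ + d₂*d₃ + d₃*d₁) := by
    simp only [d]
    nlinarith [sq_nonneg (d₁ - d₂), sq_nonneg (d₂ - d₃), sq_nonneg (d₁ - d₃),
      sq_nonneg (d₁ + d₂ + d₃ - 7)]
  refine ⟨hA, ?_⟩
  have hlt : 9*(d-1)^2 - 12*(d₁*d₂ + d₂*d₃ + d₃*d₁) < 9*(d-3)^2 := by
    simp only [d]
    nlinarith [mul_nonneg (sub_nonneg.2 h1) (sub_nonneg.2 h2),
      mul_nonneg (sub_nonneg.2 h2) (sub_nonneg.2 h3),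
      mul_nonneg (sub_nonneg.2 h3) (sub_nonneg.2 h1)]
  have hd7 : (7 : ℤ) ≤ d := by simp only [d]; linarith
  have hdR : (4 : ℝ) ≤ (d : ℝ) - 3 := by
    have : (7 : ℝ) ≤ (d : ℝ) := by exact_mod_cast hd7
    linarith
  have hpos : (0 : ℝ) < 3 * ((d : ℝ) - 3) := by linarith
  have hsqrt : Real.sqrt ((9*(d-1)^2 - 12*(d₁*d₂ + d₂*d₃ + d₃*d₁) : ℤ)) < 3 * ((d : ℝ) - 3) := by
    rw [show (3 : ℝ) * ((d : ℝ) - 3) = Real.sqrt ((3 * ((d:ℝ) - 3))^2) from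
      (Real.sqrt_sq hpos.le).symm]
    apply Real.sqrt_lt_sqrt (by exact_mod_cast hA)
    have : ((9*(d-1)^2 - 12*(d₁*d₂ + d₂*d₃ + d₃*d₁) : ℤ) : ℝ) < ((9*(d-3)^2 : ℤ) : ℝ) := by
      exact_mod_cast hlt
    push_cast at this ⊢
    nlinarith [this]
  simp only [δ₁]
  rw [sub_pos, div_lt_iff₀ (by linarith : (0:ℝ) < 6*((d:ℝ)-3))]
  calc Real.sqrt ((9*(d-1)^2 - 12*(d₁*d₂ + d₂*d₃ + d₃*d₁) : ℤ)) < 3 * ((d : ℝ) - 3) := hsqrt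
    _ = 1/2 * (6*((d:ℝ)-3)) := by ring
end
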